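/- arXiv:1405.2575 — 2 statements merged into one kernel-verified Lean document; each statement's English description precedes it below -/
import Mathlib

section
/- Let γ ∈ (0,1] and let u : ℝ^d → ℝ^d be continuously differentiable with sup_x ‖Du(x)‖ < 1/3 and [Du]_γ = sup_{x≠x'} ‖Du(x) − Du(x')‖/|x−x'|^γ < ∞. Let ψ(x) = x + u(x), which is a C¹ diffeomorphism of ℝ^d. Then there exists a constant c₁ > 0, depending only on γ, such that ‖Dψ^{−1}(z) − Dψ^{−1}(z')‖ ≤ c₁ [Du]_γ |z − z'|^γ for all z, z' ∈ ℝ^d. -/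
/-!
Write `ψ = id + u` and `K = (1 - c)⁻¹`, where `c < 1/3` bounds `‖Du‖`. Since `u` is
`c`-Lipschitz, `ψ⁻¹` is `K`-Lipschitz, hence `‖Dψ⁻¹‖ ≤ K ≤ 3/2`. With `A = Dψ⁻¹(z)` and
`A' = Dψ⁻¹(z')`, the chain rule makes `A` a left inverse of `1 + Du(ψ⁻¹ z)` and `A'` a right
inverse of `1 + Du(ψ⁻¹ z')`, so `A - A' = A (Du(ψ⁻¹ z') - Du(ψ⁻¹ z)) A'`. Bounding the middle
factor by the Hölder condition and the Lipschitz bound for `ψ⁻¹` gives the estimate with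
`c₁ = (3/2)^(2 + γ)`.
-/

noncomputable section

/-- The `γ`-Hölder seminorm `[f]_γ` (as the least admissible Hölder constant). -/
def holderSemi {E F : Type*} [NormedAddCommGroup E] [NormedAddCommGroup F]
    (γ : ℝ) (f : E → F) : ℝ :=
  sInf {C : ℝ | 0 ≤ C ∧ ∀ x y, ‖f x - f y‖ ≤ C * ‖x - y‖ ^ γ}

theorem holderSemi_spec {E F : Type*} [NormedAddCommGroup E] [NormedAddCommGroup F]
    {γ : ℝ} {f : E → F} (h : ∃ C, 0 ≤ C ∧ ∀ x y, ‖f x - f y‖ ≤ C * ‖x - y‖ ^ γ) :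
    0 ≤ holderSemi γ f ∧ ∀ x y, ‖f x - f y‖ ≤ holderSemi γ f * ‖x - y‖ ^ γ := by
  obtain ⟨C, hC⟩ := h
  have hne : {C : ℝ | 0 ≤ C ∧ ∀ x y, ‖f x - f y‖ ≤ C * ‖x - y‖ ^ γ}.Nonempty := ⟨C, hC⟩
  refine ⟨le_csInf hne fun _ hD => hD.1, fun x y => ?_⟩
  rcases (Real.rpow_nonneg (norm_nonneg (x - y)) γ).eq_or_lt with h0 | hpos
  · have hxy := hC.2 x y
    rwa [← h0, mul_zero] at hxy ⊢
  · rw [← div_le_iff₀ hpos]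
    exact le_csInf hne fun D hD => (div_le_iff₀ hpos).2 (hD.2 x y)

theorem sub_eq_mul_sub_mul_of_mul_eq_one {R : Type*} [Ring R] {a a' b b' : R}
    (hab : a * b = 1) (hba : b' * a' = 1) : a - a' = a * (b' - b) * a' := by
  rw [mul_sub, sub_mul, mul_assoc, hba, mul_one, hab, one_mul]

theorem norm_sub_le_of_rightInverse_id_add {E : Type*} [SeminormedAddCommGroup E]
    {u φ : E → E} {c : ℝ} (hc : c < 1) (hu : ∀ a b, ‖u a - u b‖ ≤ c * ‖a - b‖)
    (hφ : Function.RightInverse φ (fun x => x + u x)) (a b : E) :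
    ‖φ a - φ b‖ ≤ (1 - c)⁻¹ * ‖a - b‖ := by
  have hdiff : φ a - φ b = (a - b) - (u (φ a) - u (φ b)) := by
    calc φ a - φ b = (φ a + u (φ a) - (φ b + u (φ b))) - (u (φ a) - u (φ b)) := by abel
      _ = (a - b) - (u (φ a) - u (φ b)) := by
          rw [show φ a + u (φ a) = a from hφ a, show φ b + u (φ b) = b from hφ b]
  have h : ‖φ a - φ b‖ ≤ ‖a - b‖ + c * ‖φ a - φ b‖ := by
    calc ‖φ a - φ b‖ ≤ ‖a - b‖ + ‖u (φ a) - u (φ b)‖ := hdiff ▸ norm_sub_le _ _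
      _ ≤ ‖a - b‖ + c * ‖φ a - φ b‖ := by gcongr; exact hu _ _
  rw [inv_mul_eq_div, le_div_iff₀ (sub_pos.2 hc)]
  linarith

section

variable {𝕜 : Type*} [NontriviallyNormedField 𝕜]
  {E F : Type*} [NormedAddCommGroup E] [NormedSpace 𝕜 E] [NormedAddCommGroup F] [NormedSpace 𝕜 F]

theorem fderiv_comp_fderiv_of_leftInverse {f : E → F} {g : F → E} (hgf : Function.LeftInverse g f)
    {x : E} (hg : DifferentiableAt 𝕜 g (f x)) (hf : DifferentiableAt 𝕜 f x) :
    (fderiv 𝕜 g (f x)).comp (fderiv 𝕜 f x) = .id 𝕜 E := by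
  rw [← fderiv_comp x hg hf, hgf.comp_eq_id, fderiv_id]

theorem fderiv_id_add {u : E → E} {x : E} (hu : DifferentiableAt 𝕜 u x) :
    fderiv 𝕜 (fun x => x + u x) x = 1 + fderiv 𝕜 u x := by
  rw [fderiv_fun_add differentiableAt_fun_id hu, fderiv_fun_id]
  rfl

theorem norm_fderiv_sub_le_of_inverse_id_add {u φ : E → E} (hu : Differentiable 𝕜 u)
    (hφ : Differentiable 𝕜 φ) (hL : Function.LeftInverse φ (fun x => x + u x))
    (hR : Function.RightInverse φ (fun x => x + u x))
    {K : ℝ} (hK : 0 ≤ K) (hφK : ∀ a b, ‖φ a - φ b‖ ≤ K * ‖a - b‖)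
    {γ H : ℝ} (hγ : 0 ≤ γ) (hH0 : 0 ≤ H)
    (hH : ∀ x y, ‖fderiv 𝕜 u x - fderiv 𝕜 u y‖ ≤ H * ‖x - y‖ ^ γ)
    (z z' : E) :
    ‖fderiv 𝕜 φ z - fderiv 𝕜 φ z'‖ ≤ K ^ 2 * K ^ γ * H * ‖z - z'‖ ^ γ := by
  set ψ : E → E := fun x => x + u x
  have hψ : Differentiable 𝕜 ψ := differentiable_id.add hu
  have hDφ : ∀ w, ‖fderiv 𝕜 φ w‖ ≤ K := fun w =>
    norm_fderiv_le_of_lip' 𝕜 hK (Filter.Eventually.of_forall fun x => hφK x w)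
  have hleft : fderiv 𝕜 φ z * (1 + fderiv 𝕜 u (φ z)) = 1 := by
    have h := fderiv_comp_fderiv_of_leftInverse hL (hφ _) (hψ (φ z))
    rwa [show ψ (φ z) = z from hR z, fderiv_id_add (hu _)] at h
  have hright : (1 + fderiv 𝕜 u (φ z')) * fderiv 𝕜 φ z' = 1 := by
    rw [← fderiv_id_add (hu _)]
    exact fderiv_comp_fderiv_of_leftInverse hR (hψ _) (hφ _)
  have hDu : ‖fderiv 𝕜 u (φ z') - fderiv 𝕜 u (φ z)‖ ≤ H * (K ^ γ * ‖z - z'‖ ^ γ) := by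
    calc _ ≤ H * ‖φ z' - φ z‖ ^ γ := hH _ _
      _ ≤ H * (K * ‖z - z'‖) ^ γ := by
          gcongr
          rw [norm_sub_rev z]; exact hφK _ _
      _ = H * (K ^ γ * ‖z - z'‖ ^ γ) := by rw [Real.mul_rpow hK (norm_nonneg _)]
  rw [sub_eq_mul_sub_mul_of_mul_eq_one hleft hright, add_sub_add_left_eq_sub]
  calc _ ≤ ‖fderiv 𝕜 φ z‖ * ‖fderiv 𝕜 u (φ z') - fderiv 𝕜 u (φ z)‖ * ‖fderiv 𝕜 φ z'‖ :=
        norm_mul₃_le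
    _ ≤ K * (H * (K ^ γ * ‖z - z'‖ ^ γ)) * K := by gcongr <;> exact hDφ _
    _ = K ^ 2 * K ^ γ * H * ‖z - z'‖ ^ γ := by ring

end

/-- Hölder estimate for the derivative of the inverse of `ψ = id + u`:
`‖Dψ⁻¹(z) - Dψ⁻¹(z')‖ ≤ c₁ [Du]_γ |z - z'|^γ`, with `c₁` depending only on `γ`. -/
theorem inverse_derivative_holder
    (γ : ℝ) (hγ : 0 < γ ∧ γ ≤ 1) :
    ∃ c₁ : ℝ, 0 < c₁ ∧
      ∀ (d : ℕ), 1 ≤ d →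
        ∀ u : EuclideanSpace ℝ (Fin d) → EuclideanSpace ℝ (Fin d),
          ContDiff ℝ 1 u →
          (∃ c : ℝ, c < 1/3 ∧ ∀ x, ‖fderiv ℝ u x‖ ≤ c) →
          (∃ C, 0 ≤ C ∧ ∀ x y, ‖fderiv ℝ u x - fderiv ℝ u y‖ ≤ C * ‖x - y‖ ^ γ) →
          ∀ φ : EuclideanSpace ℝ (Fin d) → EuclideanSpace ℝ (Fin d),
            Function.LeftInverse φ (fun x => x + u x) →
            Function.RightInverse φ (fun x => x + u x) →
            ContDiff ℝ 1 φ →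
            ∀ z z', ‖fderiv ℝ φ z - fderiv ℝ φ z'‖ ≤
              c₁ * holderSemi γ (fun x => fderiv ℝ u x) * ‖z - z'‖ ^ γ := by
  refine ⟨(3 / 2) ^ 2 * (3 / 2) ^ γ, by positivity, ?_⟩
  intro d _ u hu ⟨c, hc, hDu⟩ hHol φ hL hR hφ z z'
  have hu' : Differentiable ℝ u := hu.differentiable one_ne_zero
  have hK0 : 0 ≤ (1 - c)⁻¹ := inv_nonneg.2 (by linarith)
  have hK : (1 - c)⁻¹ ≤ 3 / 2 := by
    rw [inv_le_comm₀ (by linarith) (by norm_num)]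
    linarith
  have hu_lip : ∀ a b, ‖u a - u b‖ ≤ c * ‖a - b‖ := fun a b =>
    convex_univ.norm_image_sub_le_of_norm_fderiv_le (fun x _ => hu' x) (fun x _ => hDu x)
      (Set.mem_univ b) (Set.mem_univ a)
  obtain ⟨hH0, hH⟩ := holderSemi_spec hHol
  calc ‖fderiv ℝ φ z - fderiv ℝ φ z'‖
      ≤ (1 - c)⁻¹ ^ 2 * (1 - c)⁻¹ ^ γ * holderSemi γ (fun x => fderiv ℝ u x) * ‖z - z'‖ ^ γ :=
        norm_fderiv_sub_le_of_inverse_id_add hu' (hφ.differentiable one_ne_zero) hL hR hK0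
          (norm_sub_le_of_rightInverse_id_add (by linarith) hu_lip hR) hγ.1.le hH0 hH z z'
    _ ≤ (3 / 2) ^ 2 * (3 / 2) ^ γ * holderSemi γ (fun x => fderiv ℝ u x) * ‖z - z'‖ ^ γ := by
        gcongr
        exact hγ.1.le
end
end

section
/- Let γ ∈ (0,1] and let u : ℝ^d → ℝ^d be continuously differentiable with sup_x ‖Du(x)‖ < 1/3 and [Du]_γ < ∞; let ψ(x) = x + u(x), a C¹ diffeomorphism of ℝ^d with inverse ψ^{−1}. Let ν be a Borel measure on ℝ^d with ∫_{{|z| ≤ 1}} |z|^{2γ} ν(dz) < ∞. Define g(y,z) = u(ψ^{−1}(y) + z) + z − u(ψ^{−1}(y)) for y, z ∈ ℝ^d. Then there exists a constant c > 0, depending only on γ, [Du]_γ and ∫_{{|z|≤1}} |z|^{2γ} ν(dz), such that ∫_{{|z| ≤ 1}} |g(y,z) − g(y',z)|² ν(dz) ≤ c |y − y'|² for all y, y' ∈ ℝ^d. -/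
/-!
The `z` cancels in `g(y,z) - g(y',z)`, leaving the increment of `x ↦ u(x+z) - u(x)` between
`ψ⁻¹ y` and `ψ⁻¹ y'`. The derivative of that map is `Du(x+z) - Du(x)`, of norm at most
`[Du]_γ |z|^γ`, and `ψ⁻¹` is `(1 - ‖Du‖_∞)⁻¹`-Lipschitz because `ψ = id + u` with `u` a
contraction. Hence `|g(y,z) - g(y',z)|² ≤ c |z|^{2γ} |y - y'|²`; integrate over `|z| ≤ 1`.
-/

open MeasureTheory
open scoped ENNReal

noncomputable section

open scoped NNReal

theorem lipschitzWith_of_rightInverse_id_add {E : Type*} [SeminormedAddCommGroup E]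
    {u φ : E → E} {K : ℝ≥0} (hu : LipschitzWith K u) (hK : K < 1)
    (hφ : Function.RightInverse φ (fun x => x + u x)) : LipschitzWith (1 - K)⁻¹ φ := by
  simpa using (AntilipschitzWith.id.add_lipschitzWith hu (by simpa using hK)).to_rightInverse hφ

theorem norm_sub_sub_sub_le_of_fderiv_holder {E F : Type*} [NormedAddCommGroup E]
    [NormedSpace ℝ E] [NormedAddCommGroup F] [NormedSpace ℝ F] {u : E → F}
    (hu : Differentiable ℝ u) {C γ : ℝ}
    (hC : ∀ x y, ‖fderiv ℝ u x - fderiv ℝ u y‖ ≤ C * ‖x - y‖ ^ γ) (a b z : E) :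
    ‖(u (a + z) - u a) - (u (b + z) - u b)‖ ≤ C * ‖z‖ ^ γ * ‖a - b‖ := by
  have hderiv : ∀ x, HasFDerivAt (fun x => u (x + z) - u x)
      (fderiv ℝ u (x + z) - fderiv ℝ u x) x := fun x =>
    (((hu (x + z)).hasFDerivAt.comp x ((hasFDerivAt_id x).add_const z)).sub
      (hu x).hasFDerivAt :)
  have hbound : ∀ x, ‖fderiv ℝ u (x + z) - fderiv ℝ u x‖ ≤ C * ‖z‖ ^ γ := fun x => by
    simpa using hC (x + z) x
  simpa using convex_univ.norm_image_sub_le_of_norm_hasFDerivWithin_le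
    (fun x _ => (hderiv x).hasFDerivWithinAt) (fun x _ => hbound x)
    (Set.mem_univ b) (Set.mem_univ a)

theorem lintegral_ofReal_le_ofReal_mul_toReal {α : Type*} [MeasurableSpace α] {μ : Measure α}
    {f g : α → ℝ} {A : ℝ} (hA : 0 ≤ A) (hfg : ∀ x, f x ≤ A * g x)
    (hg : ∫⁻ x, ENNReal.ofReal (g x) ∂μ ≠ ∞) :
    ∫⁻ x, ENNReal.ofReal (f x) ∂μ ≤ ENNReal.ofReal (A * (∫⁻ x, ENNReal.ofReal (g x) ∂μ).toReal) :=
  calc ∫⁻ x, ENNReal.ofReal (f x) ∂μ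
      ≤ ∫⁻ x, ENNReal.ofReal A * ENNReal.ofReal (g x) ∂μ := lintegral_mono fun x => by
        rw [← ENNReal.ofReal_mul hA]; exact ENNReal.ofReal_le_ofReal (hfg x)
    _ = ENNReal.ofReal (A * (∫⁻ x, ENNReal.ofReal (g x) ∂μ).toReal) := by
        rw [lintegral_const_mul' _ _ ENNReal.ofReal_ne_top, ENNReal.ofReal_mul hA,
          ENNReal.ofReal_toReal hg]

theorem jump_coefficient_lipschitz_general
    (d : ℕ) (γ : ℝ)
    (u : EuclideanSpace ℝ (Fin d) → EuclideanSpace ℝ (Fin d))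
    (hu : ContDiff ℝ 1 u)
    (hDu : ∃ c : ℝ, c < 1/3 ∧ ∀ x, ‖fderiv ℝ u x‖ ≤ c)
    (hDuH : ∃ C, 0 ≤ C ∧ ∀ x y, ‖fderiv ℝ u x - fderiv ℝ u y‖ ≤ C * ‖x - y‖ ^ γ)
    (φ : EuclideanSpace ℝ (Fin d) → EuclideanSpace ℝ (Fin d))
    (hφr : Function.RightInverse φ (fun x => x + u x))
    (ν : Measure (EuclideanSpace ℝ (Fin d)))
    (hmom : (∫⁻ z in {z : EuclideanSpace ℝ (Fin d) | ‖z‖ ≤ 1},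
      ENNReal.ofReal (‖z‖ ^ (2 * γ)) ∂ν) < ⊤) :
    ∃ c : ℝ, 0 < c ∧
      ∀ y y' : EuclideanSpace ℝ (Fin d),
        (∫⁻ z in {z : EuclideanSpace ℝ (Fin d) | ‖z‖ ≤ 1},
          ENNReal.ofReal (‖(u (φ y + z) + z - u (φ y)) -
            (u (φ y' + z) + z - u (φ y'))‖ ^ 2) ∂ν) ≤
          ENNReal.ofReal (c * ‖y - y'‖ ^ 2) := by
  obtain ⟨c₀, hc₀, hDu⟩ := hDu
  obtain ⟨C, hC₀, hC⟩ := hDuH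
  have hdiff : Differentiable ℝ u := hu.differentiable one_ne_zero
  lift c₀ to ℝ≥0 using (norm_nonneg _).trans (hDu 0)
  set L : ℝ≥0 := (1 - c₀)⁻¹
  have hφ : LipschitzWith L φ := lipschitzWith_of_rightInverse_id_add
    (lipschitzWith_of_nnnorm_fderiv_le hdiff fun x => hDu x)
    (by rw [← NNReal.coe_lt_coe]; push_cast; linarith) hφr
  set M := (∫⁻ z in {z : EuclideanSpace ℝ (Fin d) | ‖z‖ ≤ 1},
    ENNReal.ofReal (‖z‖ ^ (2 * γ)) ∂ν).toReal
  refine ⟨(C * L) ^ 2 * M + 1, by positivity, fun y y' => ?_⟩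
  have hpt : ∀ z : EuclideanSpace ℝ (Fin d),
      ‖(u (φ y + z) + z - u (φ y)) - (u (φ y' + z) + z - u (φ y'))‖ ^ 2
        ≤ ((C * L) ^ 2 * ‖y - y'‖ ^ 2) * ‖z‖ ^ (2 * γ) := fun z => by
    have hinc : ‖(u (φ y + z) + z - u (φ y)) - (u (φ y' + z) + z - u (φ y'))‖
        ≤ C * ‖z‖ ^ γ * (L * ‖y - y'‖) := by
      rw [show (u (φ y + z) + z - u (φ y)) - (u (φ y' + z) + z - u (φ y'))
          = (u (φ y + z) - u (φ y)) - (u (φ y' + z) - u (φ y')) by abel]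
      exact (norm_sub_sub_sub_le_of_fderiv_holder hdiff hC _ _ z).trans
        (by gcongr; exact hφ.norm_sub_le y y')
    calc _ ≤ (C * ‖z‖ ^ γ * (L * ‖y - y'‖)) ^ 2 := by gcongr
      _ = ((C * L) ^ 2 * ‖y - y'‖ ^ 2) * ‖z‖ ^ (2 * γ) := by
        rw [mul_comm 2 γ, Real.rpow_mul (norm_nonneg z), Real.rpow_two]; ring
  refine (lintegral_ofReal_le_ofReal_mul_toReal (by positivity) hpt hmom.ne).trans
    (ENNReal.ofReal_le_ofReal ?_)
  nlinarith [sq_nonneg ‖y - y'‖]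

/-- Lipschitz estimate for the jump coefficient
`g(y,z) = u(ψ⁻¹(y)+z) + z - u(ψ⁻¹(y))` of the auxiliary SDE:
`∫_{|z|≤1} |g(y,z) - g(y',z)|² ν(dz) ≤ c |y - y'|²`. -/
theorem jump_coefficient_lipschitz
    (d : ℕ) (hd : 1 ≤ d) (γ : ℝ) (hγ : 0 < γ ∧ γ ≤ 1)
    (u : EuclideanSpace ℝ (Fin d) → EuclideanSpace ℝ (Fin d))
    (hu : ContDiff ℝ 1 u)
    (hDu : ∃ c : ℝ, c < 1/3 ∧ ∀ x, ‖fderiv ℝ u x‖ ≤ c)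
    (hDuH : ∃ C, 0 ≤ C ∧ ∀ x y, ‖fderiv ℝ u x - fderiv ℝ u y‖ ≤ C * ‖x - y‖ ^ γ)
    (φ : EuclideanSpace ℝ (Fin d) → EuclideanSpace ℝ (Fin d))
    (hφl : Function.LeftInverse φ (fun x => x + u x))
    (hφr : Function.RightInverse φ (fun x => x + u x))
    (hφC : ContDiff ℝ 1 φ)
    (ν : Measure (EuclideanSpace ℝ (Fin d)))
    (hmom : (∫⁻ z in {z : EuclideanSpace ℝ (Fin d) | ‖z‖ ≤ 1},
      ENNReal.ofReal (‖z‖ ^ (2 * γ)) ∂ν) < ⊤) :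
    ∃ c : ℝ, 0 < c ∧
      ∀ y y' : EuclideanSpace ℝ (Fin d),
        (∫⁻ z in {z : EuclideanSpace ℝ (Fin d) | ‖z‖ ≤ 1},
          ENNReal.ofReal (‖(u (φ y + z) + z - u (φ y)) -
            (u (φ y' + z) + z - u (φ y'))‖ ^ 2) ∂ν) ≤
          ENNReal.ofReal (c * ‖y - y'‖ ^ 2) :=
  jump_coefficient_lipschitz_general d γ u hu hDu hDuH φ hφr ν hmom
end
end
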